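/- arXiv:math/0403525 — 7 statements merged into one kernel-verified Lean document; each statement's English description precedes it below -/
import Mathlib

section
/- Let T be a compact connected topological 2-manifold (a nonempty T2 charted space over EuclideanSpace ℝ (Fin 2)) and let z¹, …, z^{k+n} be pairwise distinct points of T, with n ≥ 1. Let ℱ_k denote the subspace of the homeomorphism group Homeomorph T T consisting of homeomorphisms fixing each of z¹, …, z^k, and ℱ_{k+n} the subspace of homeomorphisms fixing each of z¹, …, z^{k+n}, both with the compact-open topology. Then the evaluation map ε : ℱ_k → Conf_n(T ∖ {z¹,…,z^k}), ε(h) = (h(z^{k+1}), …, h(z^{k+n})), is a surjective locally trivial fibering with fibre ℱ_{k+n}: ε is continuous and surjective, and every point of Conf_n(T ∖ {z¹,…,z^k}) has an open neighborhood U together with a homeomorphism ε⁻¹(U) ≃ₜ U × ℱ_{k+n} commuting with the projections to U. -/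
/-- The ordered configuration space of `n` points of a topological space `X`. -/
abbrev Conf (n : ℕ) (X : Type*) [TopologicalSpace X] : Type _ :=
  {f : Fin n → X // Function.Injective f}

/-- The compact-open topology on the group of self-homeomorphisms of a space,
induced from the compact-open topology on `C(T, T)`. -/
noncomputable instance Homeomorph.instTopologicalSpaceCompactOpen
    (T : Type*) [TopologicalSpace T] : TopologicalSpace (T ≃ₜ T) :=
  TopologicalSpace.induced (fun h => (h : C(T, T)))
    ContinuousMap.compactOpen

/-!
In a chart, `u ↦ u + max (1 - dist u x₀ / r) 0 • d` is a `1/2`-Lipschitz perturbation of the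
identity when `‖d‖ ≤ r / 2`, hence a homeomorphism; it is supported in `closedBall x₀ r` and moves
`x₀` to `x₀ + d`. Transported to the surface, these give around each point a continuous family of
homeomorphisms with small support pushing the point to any nearby point. Multiplying such
families for the `n` points of a configuration, with disjoint supports avoiding `z 1, …, z k`,
gives a continuous local section `σ` of `ε`, and `h ↦ (ε h, σ (ε h)⁻¹ * h)` trivializes `ε` over
the domain of `σ`; this map is continuous because the homeomorphism group of a compact Hausdorff
space is a topological group. For surjectivity, move the points one at a time: the complement of
finitely many points in a connected surface is connected, and the local pushes make the orbits of
the homeomorphisms supported in a connected open set open.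
-/

open Set Filter Topology Metric
open scoped NNReal

namespace Homeomorph

variable {X Y : Type*} [TopologicalSpace X] [TopologicalSpace Y]

theorem continuous_toContinuousMap : Continuous fun g : X ≃ₜ X => (g : C(X, X)) :=
  continuous_induced_dom

theorem continuous_compactOpen_iff {f : Y → X ≃ₜ X} :
    Continuous f ↔ Continuous fun y => (f y : C(X, X)) :=
  continuous_induced_rng

instance [LocallyCompactSpace X] : ContinuousMul (X ≃ₜ X) where
  continuous_mul := continuous_compactOpen_iff.2 <|
    ContinuousMap.continuous_comp'.comp <|
      (continuous_toContinuousMap.comp continuous_snd).prodMk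
        (continuous_toContinuousMap.comp continuous_fst)

/-- `g⁻¹` maps `K` into `U` iff `g` maps `Uᶜ` into `Kᶜ`; in a compact Hausdorff space both
pairs are (compact, open), so inversion is continuous. -/
instance [CompactSpace X] [T2Space X] : IsTopologicalGroup (X ≃ₜ X) where
  continuous_inv := by
    refine continuous_compactOpen_iff.2 <| ContinuousMap.continuous_compactOpen.2
      fun K hK U hU => ?_
    have : {g : X ≃ₜ X | MapsTo (g⁻¹ : X ≃ₜ X) K U} =
        (fun g : X ≃ₜ X => (g : C(X, X))) ⁻¹' {f | MapsTo f Uᶜ Kᶜ} := by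
      ext g
      refine ⟨fun h x hx hgx => hx ?_, fun h x hx => ?_⟩
      · simpa using h hgx
      · by_contra hxU
        simpa [hx] using h hxU
    exact this ▸ (ContinuousMap.isOpen_setOfPred_mapsTo hU.isClosed_compl.isCompact
      hK.isClosed.isOpen_compl).preimage continuous_toContinuousMap

theorem prod_ofFn_apply_of_forall {n : ℕ} (g : Fin n → X ≃ₜ X) {t : X} (hg : ∀ i, g i t = t) :
    (List.ofFn g).prod t = t := by
  induction n with
  | zero => rfl
  | succ n ih => rw [List.ofFn_succ, List.prod_cons, mul_apply, ih _ fun i => hg _, hg]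

theorem prod_ofFn_apply {n : ℕ} (g : Fin n → X ≃ₜ X) {p q : Fin n → X}
    (hg : ∀ j, g j (p j) = q j) (hp : ∀ i j, i ≠ j → g i (p j) = p j)
    (hq : ∀ i j, i ≠ j → g i (q j) = q j) (j : Fin n) : (List.ofFn g).prod (p j) = q j := by
  induction n with
  | zero => exact j.elim0
  | succ n ih =>
    rw [List.ofFn_succ, List.prod_cons, mul_apply]
    induction j using Fin.cases with
    | zero => rw [prod_ofFn_apply_of_forall _ fun i => hp _ _ (Fin.succ_ne_zero i), hg]
    | succ j =>
      rw [ih (fun i => g i.succ) (fun i => hg _)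
        (fun i k hik => hp _ _ (Fin.succ_injective _ |>.ne hik))
        (fun i k hik => hq _ _ (Fin.succ_injective _ |>.ne hik)), hq _ _ (Fin.succ_ne_zero j).symm]

end Homeomorph

section LocalSection

variable {G B : Type*} [Group G] [TopologicalSpace G] [IsTopologicalGroup G] [TopologicalSpace B]
  {P Q : G → Prop} {ε : {g // P g} → B} {U : Set B}

/-- `hP`, `hεσ` and `hQ` say that left translation by `σ q` maps `{g // Q g}` onto `ε⁻¹' {q}`. -/
theorem exists_homeomorph_prod_of_localSection (hε : Continuous ε) (σ : U → G)
    (hσ : Continuous σ) (hP : ∀ q g, Q g → P (σ q * g))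
    (hεσ : ∀ q g (hg : Q g), ε ⟨σ q * g, hP q g hg⟩ = q)
    (hQ : ∀ h (hh : ε h ∈ U), Q ((σ ⟨ε h, hh⟩)⁻¹ * h)) :
    ∃ φ : {h : {g // P g} // ε h ∈ U} ≃ₜ U × {g // Q g}, ∀ h, (φ h).1 = ε h.1 := by
  have hεU : Continuous fun h : {h : {g // P g} // ε h ∈ U} => (⟨ε h, h.2⟩ : U) :=
    (hε.comp continuous_subtype_val).subtype_mk _
  have mem : ∀ (q : U) (g : {g // Q g}), ε ⟨σ q * g, hP q g g.2⟩ ∈ U :=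
    fun q g => (hεσ q g g.2) ▸ q.2
  refine ⟨{
    toFun := fun h => (⟨ε h, h.2⟩, ⟨(σ ⟨ε h, h.2⟩)⁻¹ * h, hQ h.1 h.2⟩)
    invFun := fun qg => ⟨⟨σ qg.1 * qg.2, hP _ _ qg.2.2⟩, mem qg.1 qg.2⟩
    left_inv := fun h => by simp
    right_inv := fun ⟨q, g⟩ => by
      have hq := hεσ q g g.2
      have cancel : ∀ q' : U, q' = q → (σ q')⁻¹ * (σ q * g) = g := by
        rintro _ rfl; exact inv_mul_cancel_left _ _
      exact Prod.ext (Subtype.ext hq) (Subtype.ext (cancel _ (Subtype.ext hq)))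
    continuous_toFun := hεU.prodMk <| Continuous.subtype_mk ((hσ.comp hεU).inv.mul
      (continuous_subtype_val.comp continuous_subtype_val)) _
    continuous_invFun := Continuous.subtype_mk (Continuous.subtype_mk
      ((hσ.comp continuous_fst).mul (continuous_subtype_val.comp continuous_snd)) _)
      fun qg => mem qg.1 qg.2 },
    fun h => rfl⟩

end LocalSection

noncomputable section PushMap

variable {E : Type*} [NormedAddCommGroup E] [NormedSpace ℝ E]

def pushMap (x₀ d : E) (r : ℝ) (u : E) : E := u + max (1 - dist u x₀ / r) 0 • d

theorem pushMap_self (x₀ d : E) (r : ℝ) : pushMap x₀ d r x₀ = x₀ + d := by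
  simp [pushMap]

theorem pushMap_of_le {x₀ d u : E} {r : ℝ} (hr : 0 < r) (hu : r ≤ dist u x₀) :
    pushMap x₀ d r u = u := by
  have : 1 - dist u x₀ / r ≤ 0 := by rw [sub_nonpos, le_div_iff₀ hr]; linarith
  simp [pushMap, max_eq_right this]

theorem continuous_pushMap (x₀ : E) (r : ℝ) :
    Continuous fun p : E × E => pushMap x₀ p.1 r p.2 := by
  unfold pushMap; fun_prop

theorem approximatesLinearOn_pushMap {x₀ d : E} {r : ℝ} (hr : 0 < r) (hd : ‖d‖ ≤ r / 2) :
    ApproximatesLinearOn (pushMap x₀ d r) (ContinuousLinearEquiv.refl ℝ E : E →L[ℝ] E) univ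
      (1 / 2) := by
  intro u _ v _
  have hφ : |max (1 - dist u x₀ / r) 0 - max (1 - dist v x₀ / r) 0| ≤ dist u v / r :=
    calc _ ≤ |(1 - dist u x₀ / r) - (1 - dist v x₀ / r)| := abs_max_sub_max_le_abs _ _ _
      _ = |dist u x₀ - dist v x₀| / r := by
        rw [show (1 - dist u x₀ / r) - (1 - dist v x₀ / r) = (dist v x₀ - dist u x₀) / r by ring,
          abs_div, abs_of_pos hr, abs_sub_comm]
      _ ≤ dist u v / r := by gcongr; exact abs_dist_sub_le _ _ _
  calc ‖pushMap x₀ d r u - pushMap x₀ d r v - (u - v)‖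
      = |max (1 - dist u x₀ / r) 0 - max (1 - dist v x₀ / r) 0| * ‖d‖ := by
        rw [← Real.norm_eq_abs, ← norm_smul, sub_smul]; simp only [pushMap]; congr 1; abel
    _ ≤ dist u v / r * (r / 2) := by gcongr
    _ = (1 / 2 : ℝ≥0) * ‖u - v‖ := by rw [dist_eq_norm]; push_cast; field_simp

variable [CompleteSpace E]

def pushHomeomorph (x₀ : E) {d : E} {r : ℝ} (hr : 0 < r) (hd : ‖d‖ ≤ r / 2) : E ≃ₜ E :=
  (approximatesLinearOn_pushMap (x₀ := x₀) hr hd).toHomeomorph (pushMap x₀ d r) <| by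
    rcases subsingleton_or_nontrivial E with hE | hE
    · exact .inl hE
    · right
      norm_num

@[simp]
theorem coe_pushHomeomorph (x₀ : E) {d : E} {r : ℝ} (hr : 0 < r) (hd : ‖d‖ ≤ r / 2) :
    ⇑(pushHomeomorph x₀ hr hd) = pushMap x₀ d r := rfl

end PushMap

theorem Set.mapsTo_of_injective_of_eqOn_compl {α : Type*} {f : α → α} {K s : Set α}
    (hf : Function.Injective f) (hKs : K ⊆ s) (hfK : EqOn f id Kᶜ) : MapsTo f s s := by
  intro u hu
  by_cases h : f u ∈ K
  · exact hKs h
  · rwa [hf (hfK h)]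

namespace OpenPartialHomeomorph

variable {X E P : Type*} [TopologicalSpace X] [TopologicalSpace E] [TopologicalSpace P]
  (e : OpenPartialHomeomorph X E) {f g : E → E} {K : Set E} {t : X}

open Classical in
noncomputable def conjMap (f : E → E) : X → X := e.source.piecewise (e.symm ∘ f ∘ e) id

theorem conjMap_of_mem (ht : t ∈ e.source) : e.conjMap f t = e.symm (f (e t)) := by
  simp [conjMap, ht]

theorem conjMap_of_notMem (ht : t ∉ e.source) : e.conjMap f t = t := by
  simp [conjMap, ht]

theorem conjMap_of_notMem_image (hf : ∀ u ∉ K, f u = u)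
    (ht : t ∉ e.symm '' K) : e.conjMap f t = t := by
  by_cases hts : t ∈ e.source
  · have : e t ∉ K := fun h => ht ⟨e t, h, e.left_inv hts⟩
    rw [e.conjMap_of_mem hts, hf _ this, e.left_inv hts]
  · exact e.conjMap_of_notMem hts

theorem conjMap_conjMap (hg : MapsTo g e.target e.target) (hfg : ∀ u ∈ e.target, f (g u) = u)
    (t : X) : e.conjMap f (e.conjMap g t) = t := by
  by_cases hts : t ∈ e.source
  · have hgt := hg (e.map_source hts)
    rw [e.conjMap_of_mem hts, e.conjMap_of_mem (e.map_target hgt), e.right_inv hgt,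
      hfg _ (e.map_source hts), e.left_inv hts]
  · rw [e.conjMap_of_notMem hts, e.conjMap_of_notMem hts]

theorem continuous_conjMap [T2Space X] {f : P → E → E} (hf : Continuous (Function.uncurry f))
    (hK : IsCompact K) (hKt : K ⊆ e.target) (hfK : ∀ p, ∀ u ∉ K, f p u = u)
    (hft : ∀ p, MapsTo (f p) e.target e.target) :
    Continuous fun q : P × X => e.conjMap (f q.1) q.2 := by
  refine continuous_iff_continuousAt.2 fun q => ?_
  by_cases hq : q.2 ∈ e.source
  · have hsrc : {q : P × X | q.2 ∈ e.source} ∈ 𝓝 q :=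
      (e.open_source.preimage continuous_snd).mem_nhds hq
    have hcont : ContinuousOn (fun q : P × X => e.symm (f q.1 (e q.2))) {q | q.2 ∈ e.source} :=
      e.continuousOn_symm.comp (hf.comp_continuousOn (continuousOn_fst.prodMk
        (e.continuousOn.comp continuousOn_snd fun _ h => h))) fun q hq => hft _ (e.map_source hq)
    refine (hcont.continuousAt hsrc).congr ?_
    filter_upwards [hsrc] with q hq using (e.conjMap_of_mem hq).symm
  · have hKX : IsClosed (e.symm '' K) :=
      (hK.image_of_continuousOn (e.continuousOn_symm.mono hKt)).isClosed
    have hq' : q.2 ∉ e.symm '' K := fun ⟨u, hu, hequ⟩ => hq (hequ ▸ e.map_target (hKt hu))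
    refine continuous_snd.continuousAt.congr ?_
    filter_upwards [(hKX.isOpen_compl.preimage continuous_snd).mem_nhds hq'] with q hq
    exact (e.conjMap_of_notMem_image (hfK q.1) hq).symm

noncomputable def conjHomeomorph [T2Space X] (f : E ≃ₜ E) (hK : IsCompact K) (hKt : K ⊆ e.target)
    (hf : ∀ u ∉ K, f u = u) : X ≃ₜ X :=
  have hf' : ∀ u ∉ K, f.symm u = u := fun u hu => by
    rw [f.symm_apply_eq, hf u hu]
  have hmaps : ∀ g : E ≃ₜ E, (∀ u ∉ K, g u = u) → MapsTo g e.target e.target :=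
    fun g hg => mapsTo_of_injective_of_eqOn_compl g.injective hKt hg
  have hcont : ∀ g : E ≃ₜ E, (∀ u ∉ K, g u = u) → Continuous (e.conjMap g) := fun g hg =>
    (e.continuous_conjMap (P := Unit) (f := fun _ => g) (g.continuous.comp continuous_snd) hK hKt
      (fun _ => hg) fun _ => hmaps g hg).comp (Continuous.prodMk_right ())
  { toFun := e.conjMap f
    invFun := e.conjMap f.symm
    left_inv := e.conjMap_conjMap (hmaps f hf) fun u _ => f.symm_apply_apply u
    right_inv := e.conjMap_conjMap (hmaps f.symm hf') fun u _ => f.apply_symm_apply u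
    continuous_toFun := hcont f hf
    continuous_invFun := hcont f.symm hf' }

@[simp]
theorem coe_conjHomeomorph [T2Space X] (f : E ≃ₜ E) (hK : IsCompact K) (hKt : K ⊆ e.target)
    (hf : ∀ u ∉ K, f u = u) : ⇑(e.conjHomeomorph f hK hKt hf) = e.conjMap f := rfl

end OpenPartialHomeomorph

theorem exists_continuous_pushFamily {E X : Type*} [NormedAddCommGroup E] [NormedSpace ℝ E]
    [ProperSpace E] [TopologicalSpace X] [T2Space X] [ChartedSpace E X] (x : X) {W : Set X}
    (hW : W ∈ 𝓝 x) :
    ∃ V : Set X, IsOpen V ∧ x ∈ V ∧ ∃ Γ : V → X ≃ₜ X, Continuous Γ ∧ (∀ y, Γ y x = y) ∧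
      ∀ y, ∀ t ∉ W, Γ y t = t := by
  set e := chartAt E x
  have hx : x ∈ e.source := mem_chart_source E x
  have hWe : e.target ∩ e.symm ⁻¹' W ∈ 𝓝 (e x) :=
    inter_mem (e.open_target.mem_nhds (e.map_source hx)) (e.tendsto_symm hx hW)
  obtain ⟨r, hr, hrW⟩ := nhds_basis_closedBall.mem_iff.1 hWe
  set V := e.source ∩ e ⁻¹' ball (e x) (r / 2)
  have hd : ∀ y : V, ‖e y - e x‖ ≤ r / 2 := fun y => (mem_ball_iff_norm.1 y.2.2).le
  have hsupp : ∀ d u, u ∉ closedBall (e x) r → pushMap (e x) d r u = u := fun d u hu =>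
    pushMap_of_le hr (not_le.1 hu).le
  refine ⟨V, e.isOpen_inter_preimage isOpen_ball, ⟨hx, mem_ball_self (by positivity)⟩,
    fun y => e.conjHomeomorph (pushHomeomorph (e x) hr (hd y)) (isCompact_closedBall _ _)
      (hrW.trans inter_subset_left) (hsupp _), ?_, fun y => ?_, fun y t ht => ?_⟩
  · have hfam : Continuous fun p : V × E => pushMap (e x) (e p.1 - e x) r p.2 :=
      (continuous_pushMap (e x) r).comp <| ((e.continuousOn.comp_continuous continuous_subtype_val
        fun y => y.2.1).sub continuous_const |>.comp continuous_fst).prodMk continuous_snd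
    exact Homeomorph.continuous_compactOpen_iff.2 <|
      ContinuousMap.continuous_of_continuous_uncurry _ <|
        e.continuous_conjMap hfam (isCompact_closedBall _ _) (hrW.trans inter_subset_left)
          (fun y => hsupp _) fun y => mapsTo_of_injective_of_eqOn_compl
            (pushHomeomorph (e x) hr (hd y)).injective (hrW.trans inter_subset_left) (hsupp _)
  · show e.conjMap (pushMap (e x) (e y - e x) r) x = y
    rw [e.conjMap_of_mem hx, pushMap_self, add_sub_cancel, e.left_inv y.2.1]
  · exact e.conjMap_of_notMem_image (hsupp _) fun ⟨u, hu, htu⟩ => ht (htu ▸ (hrW hu).2)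

theorem IsPreconnected.diff_singleton {X : Type*} [TopologicalSpace X] [T1Space X]
    {s N : Set X} {a : X} (hs : IsPreconnected s) (hN : IsPreconnected N) (hNs : N ⊆ s \ {a})
    (haN : insert a N ∈ 𝓝 a) : IsPreconnected (s \ {a}) := by
  rw [isPreconnected_iff_subset_of_disjoint] at hs hN ⊢
  intro u v hu hv hcov hdisj
  wlog hNu : N ⊆ u generalizing u v
  · have hNv : N ⊆ v := ((hN u v hu hv (hNs.trans hcov) <| subset_empty_iff.1 <|
      hdisj ▸ inter_subset_inter_left _ hNs).resolve_left hNu)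
    exact (this v u hv hu (by rwa [union_comm]) (by rwa [inter_comm v]) hNv).symm
  obtain ⟨B, hBN, hB, haB⟩ := mem_nhds_iff.1 haN
  have hBu : B \ {a} ⊆ u := fun t ⟨htB, hta⟩ => hNu ((hBN htB).resolve_left hta)
  refine (hs (u ∪ B) (v \ {a}) (hu.union hB) (hv.sdiff isClosed_singleton) ?_ ?_).imp
    (fun h t ht => ?_) fun h t ht => (h ht.1).1
  · intro t hts
    by_cases hta : t = a
    · exact .inl (.inr (hta ▸ haB))
    · exact (hcov ⟨hts, hta⟩).imp .inl fun htv => ⟨htv, hta⟩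
  · refine subset_empty_iff.1 fun t ⟨hts, htuB, htv, hta⟩ => ?_
    rw [← hdisj]
    exact ⟨⟨hts, hta⟩, htuB.elim id fun htB => hBu ⟨htB, hta⟩, htv⟩
  · exact (h ht.1).elim id fun htB => hBu ⟨htB, ht.2⟩

section Connectivity

variable {E X : Type*} [NormedAddCommGroup E] [NormedSpace ℝ E]

theorem isPreconnected_ball_diff_center (hE : 1 < Module.rank ℝ E) (c : E) (r : ℝ) :
    IsPreconnected (ball c r \ {c}) := by
  rcases le_or_gt r 0 with hr | hr
  · simp [ball_eq_empty.2 hr, isPreconnected_empty]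
  set f := OpenPartialHomeomorph.univBall c r
  have hf : Function.Injective f :=
    injOn_univ.1 (OpenPartialHomeomorph.univBall_source c r ▸ f.injOn)
  have : ball c r \ {c} = f '' {0}ᶜ := by
    rw [compl_eq_univ_sdiff, image_sdiff hf, image_singleton,
      OpenPartialHomeomorph.univBall_apply_zero, ← OpenPartialHomeomorph.univBall_source c r,
      f.image_source_eq_target, OpenPartialHomeomorph.univBall_target c hr]
  exact this ▸ (isConnected_compl_singleton_of_one_lt_rank hE 0).isPreconnected.image f
    (OpenPartialHomeomorph.continuous_univBall c r).continuousOn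

variable [TopologicalSpace X] [ChartedSpace E X]

theorem exists_isPreconnected_punctured_nhds (hE : 1 < Module.rank ℝ E) (a : X) {W : Set X}
    (hW : W ∈ 𝓝 a) : ∃ N : Set X, IsPreconnected N ∧ N ⊆ W \ {a} ∧ insert a N ∈ 𝓝 a := by
  set e := chartAt E a
  have ha : a ∈ e.source := mem_chart_source E a
  have hWe : e.target ∩ e.symm ⁻¹' W ∈ 𝓝 (e a) :=
    inter_mem (e.open_target.mem_nhds (e.map_source ha)) (e.tendsto_symm ha hW)
  obtain ⟨r, hr, hrW⟩ := nhds_basis_ball.mem_iff.1 hWe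
  refine ⟨e.symm '' (ball (e a) r \ {e a}), (isPreconnected_ball_diff_center hE _ r).image _
    (e.continuousOn_symm.mono fun u hu => (hrW hu.1).1), ?_, ?_⟩
  · rintro _ ⟨u, ⟨hu, hua⟩, rfl⟩
    refine ⟨(hrW hu).2, fun h => hua ?_⟩
    rw [mem_singleton_iff, ← e.right_inv (hrW hu).1, mem_singleton_iff.1 h]
  · have hB := e.symm.image_mem_nhds (e.map_source ha) (ball_mem_nhds _ hr)
    rw [e.left_inv ha] at hB
    refine mem_of_superset hB ?_
    rintro _ ⟨u, hu, rfl⟩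
    by_cases hua : u = e a
    · exact .inl (hua ▸ e.left_inv ha)
    · exact .inr ⟨u, ⟨hu, hua⟩, rfl⟩

theorem Set.Finite.isPreconnected_compl_of_one_lt_rank [T1Space X] [ConnectedSpace X]
    (hE : 1 < Module.rank ℝ E) {F : Set X} (hF : F.Finite) : IsPreconnected Fᶜ := by
  induction F, hF using Set.Finite.induction_on with
  | empty => simpa using isPreconnected_univ
  | @insert a F ha hF ih =>
    obtain ⟨N, hN, hNF, haN⟩ :=
      exists_isPreconnected_punctured_nhds hE a (hF.isClosed.isOpen_compl.mem_nhds ha)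
    rw [insert_eq, compl_union, ← sdiff_eq_compl_inter]
    exact ih.diff_singleton hN hNF haN

end Connectivity

theorem IsPreconnected.exists_homeomorph_apply_eq {E X : Type*} [NormedAddCommGroup E]
    [NormedSpace ℝ E] [ProperSpace E] [TopologicalSpace X] [T2Space X] [ChartedSpace E X]
    {Ω : Set X} (hΩo : IsOpen Ω) (hΩ : IsPreconnected Ω) {x y : X} (hx : x ∈ Ω) (hy : y ∈ Ω) :
    ∃ h : X ≃ₜ X, (∀ t ∉ Ω, h t = t) ∧ h x = y := by
  refine hΩ.induction₂ (fun x y => ∃ h : X ≃ₜ X, (∀ t ∉ Ω, h t = t) ∧ h x = y)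
    (fun x hx => ?_) (fun x y z _ _ _ ⟨g, hg, hgx⟩ ⟨h, hh, hhy⟩ => ?_)
    (fun x y _ _ ⟨h, hh, hhx⟩ => ?_) hx hy
  · obtain ⟨V, hVo, hxV, Γ, -, hΓx, hΓΩ⟩ :=
      exists_continuous_pushFamily (E := E) x (hΩo.mem_nhds hx)
    filter_upwards [mem_nhdsWithin_of_mem_nhds (hVo.mem_nhds hxV)] with y hy
    exact ⟨Γ ⟨y, hy⟩, hΓΩ _, hΓx _⟩
  · exact ⟨h * g, fun t ht => by simp [hg t ht, hh t ht], by simp [hgx, hhy]⟩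
  · exact ⟨h⁻¹, fun t ht => h.symm_apply_eq.2 (hh t ht).symm, h.symm_apply_eq.2 hhx.symm⟩

theorem Set.Finite.exists_homeomorph_apply_eq {E X : Type*} [NormedAddCommGroup E]
    [NormedSpace ℝ E] [ProperSpace E] [TopologicalSpace X] [T2Space X] [ConnectedSpace X]
    [ChartedSpace E X] (hE : 1 < Module.rank ℝ E) {F : Set X} (hF : F.Finite)
    {n : ℕ} {p q : Fin n → X} (hp : Function.Injective p) (hq : Function.Injective q)
    (hpF : ∀ j, p j ∉ F) (hqF : ∀ j, q j ∉ F) :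
    ∃ h : X ≃ₜ X, (∀ t ∈ F, h t = t) ∧ ∀ j, h (p j) = q j := by
  induction n with
  | zero => exact ⟨1, fun _ _ => rfl, finZeroElim⟩
  | succ n ih =>
    obtain ⟨h, hhF, hpq⟩ := ih (hp.comp (Fin.succ_injective n)) (hq.comp (Fin.succ_injective n))
      (fun j => hpF _) (fun j => hqF _)
    set F' := F ∪ range (q ∘ Fin.succ)
    have hF'fin : F'.Finite := hF.union (finite_range _)
    have hp0 : h (p 0) ∈ F'ᶜ := by
      rintro (h0 | ⟨j, hj⟩)
      · exact hpF 0 (h.injective (hhF _ h0) ▸ h0)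
      · exact Fin.succ_ne_zero j (hp (h.injective (hpq j ▸ hj)))
    have hq0 : q 0 ∈ F'ᶜ := by
      rintro (h0 | ⟨j, hj⟩)
      · exact hqF 0 h0
      · exact Fin.succ_ne_zero j (hq hj)
    obtain ⟨g, hg, hg0⟩ := (hF'fin.isPreconnected_compl_of_one_lt_rank hE)
      |>.exists_homeomorph_apply_eq (E := E) hF'fin.isClosed.isOpen_compl hp0 hq0
    refine ⟨g * h, fun t ht => ?_, Fin.cases ?_ fun j => ?_⟩
    · rw [Homeomorph.mul_apply, hhF t ht, hg t (not_not.2 (.inl ht))]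
    · exact hg0
    · rw [Homeomorph.mul_apply, show h (p j.succ) = q j.succ from hpq j]
      exact hg _ (not_not.2 (.inr ⟨j, rfl⟩))

theorem exists_continuous_pushFamily_pi {E X : Type*} [NormedAddCommGroup E] [NormedSpace ℝ E]
    [ProperSpace E] [TopologicalSpace X] [T2Space X] [ChartedSpace E X] {F : Set X}
    (hF : IsClosed F) {n : ℕ} {p : Fin n → X} (hp : Function.Injective p) (hpF : ∀ j, p j ∉ F) :
    ∃ V : Fin n → Set X, (∀ j, IsOpen (V j) ∧ p j ∈ V j) ∧ ∃ Γ : (∀ j, V j) → X ≃ₜ X,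
      Continuous Γ ∧ (∀ q, ∀ t ∈ F, Γ q t = t) ∧ ∀ q j, Γ q (p j) = q j := by
  have := ChartedSpace.locallyCompactSpace E X
  obtain ⟨U, hU, hUd⟩ := (finite_range p).t2_separation
  set W : Fin n → Set X := fun j => U (p j) ∩ Fᶜ
  have hW : ∀ j, W j ∈ 𝓝 (p j) := fun j =>
    ((hU _).2.inter hF.isOpen_compl).mem_nhds ⟨(hU _).1, hpF j⟩
  choose V hVo hpV Γ hΓc hΓp hΓW using fun j => exists_continuous_pushFamily (E := E) (p j) (hW j)
  have hVW : ∀ j, ∀ y : V j, (y : X) ∈ W j := fun j y => by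
    -- otherwise `Γ j y` would fix `y` and also map `p j` to `y`
    by_contra hy
    exact hy ((Γ j y).injective ((hΓW j y y hy).trans (hΓp j y).symm) ▸ mem_of_mem_nhds (hW j))
  have hWd : ∀ i j, i ≠ j → ∀ t ∈ W j, t ∉ W i := fun i j hij t htj hti =>
    (hUd (mem_range_self i) (mem_range_self j) (hp.ne hij)).ne_of_mem hti.1 htj.1 rfl
  refine ⟨V, fun j => ⟨hVo j, hpV j⟩, fun q => (List.ofFn fun j => Γ j (q j)).prod, ?_,
    fun q t ht => Homeomorph.prod_ofFn_apply_of_forall _ fun j => hΓW j _ t fun h => h.2 ht,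
    fun q => Homeomorph.prod_ofFn_apply _ (fun j => hΓp j _)
      (fun i j hij => hΓW i _ _ (hWd i j hij _ (mem_of_mem_nhds (hW j))))
      fun i j hij => hΓW i _ _ (hWd i j hij _ (hVW j _))⟩
  simp only [List.ofFn_eq_map]
  exact continuous_list_prod _ fun j _ => (hΓc j).comp (continuous_apply j)

theorem one_lt_rank_euclideanSpace_fin_two : 1 < Module.rank ℝ (EuclideanSpace ℝ (Fin 2)) := by
  rw [← Module.finrank_eq_rank, finrank_euclideanSpace_fin]; norm_num

section Configurations

variable {T : Type*} [TopologicalSpace T] {k n : ℕ}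

abbrev AvoidingFirst (k : ℕ) (z : Fin (k + n) → T) : Type _ :=
  {x : T // ∀ i : Fin (k + n), (i : ℕ) < k → x ≠ z i}

abbrev FixingFirst (k : ℕ) (z : Fin (k + n) → T) : Type _ :=
  {h : T ≃ₜ T // ∀ i : Fin (k + n), (i : ℕ) < k → h (z i) = z i}

variable {z : Fin (k + n) → T} (hz : Function.Injective z)

def evalConf (h : FixingFirst k z) : Conf n (AvoidingFirst k z) :=
  ⟨fun j => ⟨h.1 (z (Fin.natAdd k j)), fun i hi heq => by
      have := congrArg Fin.val (hz (h.1.injective (heq.trans (h.2 i hi).symm)))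
      simp only [Fin.val_natAdd] at this
      omega⟩,
    fun _ _ hjj' => Fin.natAdd_injective _ _ (hz (h.1.injective (congrArg Subtype.val hjj')))⟩

theorem continuous_evalConf : Continuous (evalConf hz) :=
  continuous_pi (fun j => ((continuous_eval_const (z (Fin.natAdd k j))).comp
    (Homeomorph.continuous_toContinuousMap.comp continuous_subtype_val)).subtype_mk _)
    |>.subtype_mk _

theorem surjective_evalConf {E : Type*} [NormedAddCommGroup E] [NormedSpace ℝ E] [ProperSpace E]
    [T2Space T] [ConnectedSpace T] [ChartedSpace E T] (hE : 1 < Module.rank ℝ E) :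
    Function.Surjective (evalConf hz) := by
  intro f
  obtain ⟨h, hF, hpq⟩ :=
    ((toFinite {i : Fin (k + n) | (i : ℕ) < k}).image z).exists_homeomorph_apply_eq hE
    (p := fun j => z (Fin.natAdd k j)) (q := fun j => (f.1 j : T))
    (hz.comp (Fin.natAdd_injective _ _)) (fun j j' hjj' => f.2 (Subtype.ext hjj'))
    (fun j ⟨i, hi, hij⟩ => by
      have := congrArg Fin.val (hz hij)
      simp only [mem_ofPred_eq, Fin.val_natAdd] at this hi
      omega)
    fun j ⟨i, hi, hij⟩ => (f.1 j).2 i hi hij.symm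
  exact ⟨⟨h, fun i hi => hF _ ⟨i, hi, rfl⟩⟩, Subtype.ext <| funext fun j => Subtype.ext (hpq j)⟩

theorem exists_localSection_evalConf {E : Type*} [NormedAddCommGroup E] [NormedSpace ℝ E]
    [ProperSpace E] [T2Space T] [ChartedSpace E T] (h₀ : FixingFirst k z) :
    ∃ U : Set (Conf n (AvoidingFirst k z)), IsOpen U ∧ evalConf hz h₀ ∈ U ∧
      ∃ σ : U → T ≃ₜ T, Continuous σ ∧
        (∀ q (i : Fin (k + n)), (i : ℕ) < k → σ q (z i) = z i) ∧
        ∀ q j, σ q (z (Fin.natAdd k j)) = (q.1.1 j : T) := by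
  have := ChartedSpace.locallyCompactSpace E T
  set p := evalConf hz h₀
  obtain ⟨V, hV, Γ, hΓc, hΓF, hΓp⟩ := exists_continuous_pushFamily_pi (E := E)
    ((toFinite {i : Fin (k + n) | (i : ℕ) < k}).image z).isClosed (p := fun j => (p.1 j : T))
    (fun j j' hjj' => p.2 (Subtype.ext hjj')) fun j ⟨i, hi, hij⟩ => (p.1 j).2 i hi hij.symm
  have hcoord : ∀ j, Continuous fun q : Conf n (AvoidingFirst k z) => (q.1 j : T) := fun j =>
    continuous_subtype_val.comp ((continuous_apply j).comp continuous_subtype_val)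
  refine ⟨{q | ∀ j, (q.1 j : T) ∈ V j}, ?_, fun j => (hV j).2,
    fun q => Γ (fun j => ⟨q.1.1 j, q.2 j⟩) * h₀.1, ?_, fun q i hi => ?_, fun q j => hΓp _ j⟩
  · simp only [ofPred_forall]
    exact isOpen_iInter_of_finite fun j => (hV j).1.preimage (hcoord j)
  · exact (hΓc.comp (continuous_pi fun j => ((hcoord j).comp continuous_subtype_val).subtype_mk
      _)).mul continuous_const
  · rw [Homeomorph.mul_apply, h₀.2 i hi, hΓF _ _ ⟨i, hi, rfl⟩]

theorem exists_trivialization_evalConf [T2Space T] [CompactSpace T]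
    {U : Set (Conf n (AvoidingFirst k z))} (σ : U → T ≃ₜ T) (hσ : Continuous σ)
    (hσk : ∀ q (i : Fin (k + n)), (i : ℕ) < k → σ q (z i) = z i)
    (hσn : ∀ q j, σ q (z (Fin.natAdd k j)) = (q.1.1 j : T)) :
    ∃ φ : {h // evalConf hz h ∈ U} ≃ₜ U × {h : T ≃ₜ T // ∀ i : Fin (k + n), h (z i) = z i},
      ∀ h, ((φ h).1 : Conf n (AvoidingFirst k z)) = evalConf hz h.1 := by
  refine exists_homeomorph_prod_of_localSection (continuous_evalConf hz) σ hσ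
    (fun q g hg i hi => by rw [Homeomorph.mul_apply, hg, hσk q i hi])
    (fun q g hg => Subtype.ext <| funext fun j => Subtype.ext ?_) fun h hh i => ?_
  · exact (congrArg (σ q) (hg _)).trans (hσn q j)
  · rw [Homeomorph.mul_apply, Homeomorph.inv_apply, Homeomorph.symm_apply_eq]
    refine Fin.addCases (fun i => ?_) (fun j => ?_) i
    · rw [h.2 _ (by simp), hσk _ _ (by simp)]
    · exact (hσn ⟨_, hh⟩ j).symm

end Configurations

theorem evaluation_map_is_locally_trivial_fibering_general
    {T : Type*} [TopologicalSpace T] [T2Space T] [CompactSpace T] [ConnectedSpace T]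
    [ChartedSpace (EuclideanSpace ℝ (Fin 2)) T]
    (k n : ℕ) (z : Fin (k + n) → T) (hz : Function.Injective z) :
    ∃ ε : {h : T ≃ₜ T // ∀ i : Fin (k + n), (i : ℕ) < k → h (z i) = z i} →
        Conf n {x : T // ∀ i : Fin (k + n), (i : ℕ) < k → x ≠ z i},
      (∀ h j, (((ε h).1 j : {x : T // ∀ i : Fin (k + n), (i : ℕ) < k → x ≠ z i}) : T) =
          h.1 (z (Fin.natAdd k j))) ∧
      Continuous ε ∧
      Function.Surjective ε ∧
      ∀ p : Conf n {x : T // ∀ i : Fin (k + n), (i : ℕ) < k → x ≠ z i},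
        ∃ U : Set (Conf n {x : T // ∀ i : Fin (k + n), (i : ℕ) < k → x ≠ z i}),
          IsOpen U ∧ p ∈ U ∧
          ∃ φ : {h : {h : T ≃ₜ T // ∀ i : Fin (k + n), (i : ℕ) < k → h (z i) = z i} //
                  ε h ∈ U} ≃ₜ
              U × {h : T ≃ₜ T // ∀ i : Fin (k + n), h (z i) = z i},
            ∀ h, ((φ h).1 : Conf n {x : T // ∀ i : Fin (k + n), (i : ℕ) < k → x ≠ z i}) =
              ε h.1 := by
  have hsurj := surjective_evalConf hz one_lt_rank_euclideanSpace_fin_two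
  refine ⟨evalConf hz, fun _ _ => rfl, continuous_evalConf hz, hsurj, fun p => ?_⟩
  obtain ⟨h₀, rfl⟩ := hsurj p
  obtain ⟨U, hUo, hpU, σ, hσ, hσk, hσn⟩ :=
    exists_localSection_evalConf (E := EuclideanSpace ℝ (Fin 2)) hz h₀
  exact ⟨U, hUo, hpU, exists_trivialization_evalConf hz σ hσ hσk hσn⟩

/-- Let `T` be a compact connected surface and `z 1, …, z (k+n)` pairwise distinct
points of `T`, with `n ≥ 1`.  The evaluation map
`ε : ℱ_k(T) → Conf_n(T ∖ {z 1, …, z k})`, `ε h = (h (z (k+1)), …, h (z (k+n)))`,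
(where `ℱ_k(T)` is the space of homeomorphisms of `T` fixing `z 1, …, z k`, with the
compact-open topology) is a surjective locally trivial fibering with fibre
`ℱ_{k+n}(T)`, the space of homeomorphisms fixing all of `z 1, …, z (k+n)`. -/
theorem evaluation_map_is_locally_trivial_fibering
    {T : Type*} [TopologicalSpace T] [T2Space T] [CompactSpace T] [ConnectedSpace T]
    [Nonempty T] [ChartedSpace (EuclideanSpace ℝ (Fin 2)) T]
    (k n : ℕ) (hn : 1 ≤ n) (z : Fin (k + n) → T) (hz : Function.Injective z) :
    ∃ ε : {h : T ≃ₜ T // ∀ i : Fin (k + n), (i : ℕ) < k → h (z i) = z i} →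
        Conf n {x : T // ∀ i : Fin (k + n), (i : ℕ) < k → x ≠ z i},
      (∀ h j, (((ε h).1 j : {x : T // ∀ i : Fin (k + n), (i : ℕ) < k → x ≠ z i}) : T) =
          h.1 (z (Fin.natAdd k j))) ∧
      Continuous ε ∧
      Function.Surjective ε ∧
      ∀ p : Conf n {x : T // ∀ i : Fin (k + n), (i : ℕ) < k → x ≠ z i},
        ∃ U : Set (Conf n {x : T // ∀ i : Fin (k + n), (i : ℕ) < k → x ≠ z i}),
          IsOpen U ∧ p ∈ U ∧
          ∃ φ : {h : {h : T ≃ₜ T // ∀ i : Fin (k + n), (i : ℕ) < k → h (z i) = z i} //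
                  ε h ∈ U} ≃ₜ
              U × {h : T ≃ₜ T // ∀ i : Fin (k + n), h (z i) = z i},
            ∀ h, ((φ h).1 : Conf n {x : T // ∀ i : Fin (k + n), (i : ℕ) < k → x ≠ z i}) =
              ε h.1 :=
  evaluation_map_is_locally_trivial_fibering_general k n z hz
end

section
/- Fix n ≥ 1 and let B = Metric.ball (0 : EuclideanSpace ℝ (Fin n)) 1 be the open unit ball. There exists a family of homeomorphisms f : B → (EuclideanSpace ℝ (Fin n) ≃ₜ EuclideanSpace ℝ (Fin n)) such that: (1) f u 0 = u for every u ∈ B; (2) f u x = x for every u ∈ B and every x ∉ B; and (3) the maps (u, x) ↦ f u x and (u, x) ↦ (f u).symm x are jointly continuous on B × EuclideanSpace ℝ (Fin n). -/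
/-!
Lift the closed unit ball of `E` to the cone `{(y, t) : t ≥ 0}` in `E × ℝ` by `x ↦ (x, 1 - ‖x‖)`,
apply the linear shear `(y, t) ↦ (y + t • v, t)`, and project radially back onto the slice
`‖y‖ + t = 1`. The shear fixes the sphere `t = 0` and commutes with the radial projection, so
the shears by `v` and `-v` induce mutually inverse homeomorphisms of `E` supported in the ball.
The shear by `v` moves the centre to `v / (1 + ‖v‖)`, which is any prescribed point `u` of the
open ball for `v = u / (1 - ‖u‖)`.
-/

open Metric

variable {E : Type*} [NormedAddCommGroup E] [NormedSpace ℝ E]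

/-- The radial projection of `(y, t) ∈ E × ℝ` onto the slice `‖y‖ + t = 1`, read in `E`. -/
noncomputable def coneNormalize (y : E) (t : ℝ) : E := (t + ‖y‖)⁻¹ • y

lemma coneNormalize_smul {c : ℝ} (hc : 0 < c) (y : E) (t : ℝ) :
    coneNormalize (c • y) (c * t) = coneNormalize y t := by
  rw [coneNormalize, coneNormalize, norm_smul, Real.norm_of_nonneg hc.le, ← mul_add,
    mul_inv, smul_smul, mul_right_comm, inv_mul_cancel₀ hc.ne', one_mul]

lemma coneNormalize_of_add_norm_eq_one {y : E} {t : ℝ} (h : t + ‖y‖ = 1) :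
    coneNormalize y t = y := by
  rw [coneNormalize, h, inv_one, one_smul]

lemma one_sub_norm_coneNormalize {y : E} {t : ℝ} (h : 0 < t + ‖y‖) :
    1 - ‖coneNormalize y t‖ = (t + ‖y‖)⁻¹ * t := by
  rw [coneNormalize, norm_smul, Real.norm_of_nonneg (inv_pos.2 h).le]
  field_simp
  ring

lemma ContinuousOn.coneNormalize {X : Type*} [TopologicalSpace X] {f : X → E} {g : X → ℝ}
    {s : Set X} (hf : ContinuousOn f s) (hg : ContinuousOn g s)
    (hpos : ∀ x ∈ s, 0 < g x + ‖f x‖) :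
    ContinuousOn (fun x => coneNormalize (f x) (g x)) s :=
  ((hg.add hf.norm).inv₀ fun x hx => (hpos x hx).ne').smul hf

noncomputable def ballShear (v x : E) : E :=
  if 1 ≤ ‖x‖ then x else coneNormalize (x + (1 - ‖x‖) • v) (1 - ‖x‖)

lemma ballShear_of_one_le_norm (v : E) {x : E} (hx : 1 ≤ ‖x‖) : ballShear v x = x :=
  if_pos hx

lemma ballShear_of_norm_lt_one (v : E) {x : E} (hx : ‖x‖ < 1) :
    ballShear v x = coneNormalize (x + (1 - ‖x‖) • v) (1 - ‖x‖) :=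
  if_neg hx.not_ge

lemma ballShear_zero_right (v : E) : ballShear v 0 = coneNormalize v 1 := by
  simp [ballShear_of_norm_lt_one]

lemma one_sub_norm_add_norm_add_smul_pos (v : E) {x : E} (hx : ‖x‖ ≤ 1) :
    0 < 1 - ‖x‖ + ‖x + (1 - ‖x‖) • v‖ := by
  rcases hx.lt_or_eq with hx | hx
  · have := norm_nonneg (x + (1 - ‖x‖) • v)
    linarith
  · simp [hx]

lemma ballShear_neg_ballShear (v x : E) : ballShear (-v) (ballShear v x) = x := by
  rcases le_or_gt 1 ‖x‖ with hx | hx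
  · rw [ballShear_of_one_le_norm v hx, ballShear_of_one_le_norm (-v) hx]
  set t := 1 - ‖x‖
  set c := (t + ‖x + t • v‖)⁻¹
  have ht : 0 < t := sub_pos.2 hx
  have hc : 0 < c := inv_pos.2 (one_sub_norm_add_norm_add_smul_pos v hx.le)
  have hy : 1 - ‖ballShear v x‖ = c * t := by
    rw [ballShear_of_norm_lt_one v hx,
      one_sub_norm_coneNormalize (one_sub_norm_add_norm_add_smul_pos v hx.le)]
  have hy_lt : ‖ballShear v x‖ < 1 := by nlinarith
  -- the shear by `-v` undoes the shear by `v` on the cone, up to the radial factor `c`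
  have hunshear : ballShear v x + (c * t) • -v = c • x := by
    rw [ballShear_of_norm_lt_one v hx, coneNormalize]
    module
  rw [ballShear_of_norm_lt_one (-v) hy_lt, hy, hunshear, coneNormalize_smul hc,
    coneNormalize_of_add_norm_eq_one (by ring)]

lemma Continuous.ballShear {X : Type*} [TopologicalSpace X] {f g : X → E}
    (hf : Continuous f) (hg : Continuous g) : Continuous fun x => ballShear (f x) (g x) := by
  refine continuous_if_le continuous_const hg.norm hg.continuousOn ?_ fun x hx => ?_
  · refine ContinuousOn.coneNormalize (by fun_prop) (by fun_prop) fun x hx => ?_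
    exact one_sub_norm_add_norm_add_smul_pos (f x) hx
  · rw [← hx, sub_self, zero_smul, add_zero, coneNormalize_of_add_norm_eq_one (by simp [← hx])]

noncomputable def ballShearHomeomorph (v : E) : E ≃ₜ E where
  toFun := ballShear v
  invFun := ballShear (-v)
  left_inv := ballShear_neg_ballShear v
  right_inv x := by simpa using ballShear_neg_ballShear (-v) x
  continuous_toFun := continuous_const.ballShear continuous_id
  continuous_invFun := continuous_const.ballShear continuous_id

lemma coneNormalize_inv_one_sub_norm_smul {u : E} (hu : ‖u‖ < 1) :
    coneNormalize ((1 - ‖u‖)⁻¹ • u) 1 = u := by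
  have hu' : 0 < 1 - ‖u‖ := sub_pos.2 hu
  have h := coneNormalize_smul (inv_pos.2 hu') u (1 - ‖u‖)
  rw [inv_mul_cancel₀ hu'.ne'] at h
  exact h.trans (coneNormalize_of_add_norm_eq_one (by ring))

theorem exists_continuous_family_of_homeomorphisms_deforming_center_of_ball_general
    (n : ℕ) :
    ∃ f : (ball (0 : EuclideanSpace ℝ (Fin n)) 1) →
        (EuclideanSpace ℝ (Fin n) ≃ₜ EuclideanSpace ℝ (Fin n)),
      (∀ u, f u 0 = (u : EuclideanSpace ℝ (Fin n))) ∧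
      (∀ (u) (x : EuclideanSpace ℝ (Fin n)),
        x ∉ ball (0 : EuclideanSpace ℝ (Fin n)) 1 → f u x = x) ∧
      Continuous (fun p : (ball (0 : EuclideanSpace ℝ (Fin n)) 1) × EuclideanSpace ℝ (Fin n) =>
        f p.1 p.2) ∧
      Continuous (fun p : (ball (0 : EuclideanSpace ℝ (Fin n)) 1) × EuclideanSpace ℝ (Fin n) =>
        (f p.1).symm p.2) := by
  let v : ball (0 : EuclideanSpace ℝ (Fin n)) 1 → EuclideanSpace ℝ (Fin n) :=
    fun u => (1 - ‖(u : EuclideanSpace ℝ (Fin n))‖)⁻¹ • (u : EuclideanSpace ℝ (Fin n))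
  have hv : Continuous v :=
    ((continuous_const.sub continuous_subtype_val.norm).inv₀ fun u =>
      (sub_pos.2 (mem_ball_zero_iff.1 u.2)).ne').smul continuous_subtype_val
  refine ⟨fun u => ballShearHomeomorph (v u), fun u => ?_, fun u x hx => ?_,
    (hv.comp continuous_fst).ballShear continuous_snd,
    (hv.comp continuous_fst).neg.ballShear continuous_snd⟩
  · exact (ballShear_zero_right _).trans
      (coneNormalize_inv_one_sub_norm_smul (mem_ball_zero_iff.1 u.2))
  · exact ballShear_of_one_le_norm _ (by simpa using hx)

/-- There is a continuous family of homeomorphisms of `EuclideanSpace ℝ (Fin n)`,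
parametrized by the points `u` of the open unit ball `B`, each supported in `B`,
taking the center `0` of the ball to `u`. -/
theorem exists_continuous_family_of_homeomorphisms_deforming_center_of_ball
    (n : ℕ) (hn : 1 ≤ n) :
    ∃ f : (ball (0 : EuclideanSpace ℝ (Fin n)) 1) →
        (EuclideanSpace ℝ (Fin n) ≃ₜ EuclideanSpace ℝ (Fin n)),
      (∀ u, f u 0 = (u : EuclideanSpace ℝ (Fin n))) ∧
      (∀ (u) (x : EuclideanSpace ℝ (Fin n)),
        x ∉ ball (0 : EuclideanSpace ℝ (Fin n)) 1 → f u x = x) ∧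
      Continuous (fun p : (ball (0 : EuclideanSpace ℝ (Fin n)) 1) × EuclideanSpace ℝ (Fin n) =>
        f p.1 p.2) ∧
      Continuous (fun p : (ball (0 : EuclideanSpace ℝ (Fin n)) 1) × EuclideanSpace ℝ (Fin n) =>
        (f p.1).symm p.2) :=
  exists_continuous_family_of_homeomorphisms_deforming_center_of_ball_general n
end

section
/- Let M be a nonempty connected topological 2-manifold (a T2 charted space over EuclideanSpace ℝ (Fin 2)). For any n : ℕ and any injective tuples x, y : Fin n → M, there exists a homeomorphism h : M ≃ₜ M such that h (x i) = y i for every i : Fin n. -/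
/-!
A homeomorphism of a normed space moving the centre of a ball to any point of the ball and fixing
the complement of the ball is obtained by perturbing the identity by a contraction; transplanted
through a chart, it moves a point of the surface anywhere nearby while fixing a given closed set.
So the classes of "movable into each other by a homeomorphism fixing a finite set `F`" are open
in `Fᶜ`, which is connected because removing a point from a connected open subset of a manifold
of dimension at least two leaves it connected (a punctured chart ball is connected). Moving the
points one at a time, each time fixing those already placed, gives the theorem.
-/

open Set Metric Topology NNReal Function

theorem Function.Injective.mapsTo_of_eqOn_compl {α : Type*} {f : α → α} {s : Set α}
    (hf : Injective f) (h : EqOn f id sᶜ) : MapsTo f s s := by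
  intro p hp
  by_contra hfp
  rw [hf (h hfp)] at hfp
  exact hfp hp

theorem IsPreconnected.sdiff_singleton {X : Type*} [TopologicalSpace X] {s V : Set X} {z : X}
    (hs : IsPreconnected s) (hV : IsOpen V) (hzV : z ∈ V) (hVs : V ⊆ s)
    (hVz : IsPreconnected (V \ {z})) (hz : z ∈ closure (V \ {z})) :
    IsPreconnected (s \ {z}) := by
  rw [isPreconnected_iff_subset_of_disjoint] at hs hVz ⊢
  intro u v hu hv hsuv huv
  have hW : V \ {z} ⊆ s \ {z} := sdiff_subset_sdiff_left hVs
  wlog hWu : V \ {z} ⊆ u generalizing u v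
  · have hWv : V \ {z} ⊆ v := (hVz u v hu hv (hW.trans hsuv)
      (subset_empty_iff.1 (huv ▸ inter_subset_inter_left _ hW))).resolve_left hWu
    exact (this v u hv hu (union_comm u v ▸ hsuv) (inter_comm u v ▸ huv) hWv).symm
  have hzv : z ∉ v := fun hzv => by
    obtain ⟨w, hwv, hwW⟩ := mem_closure_iff.1 hz v hv hzv
    exact (huv.subset ⟨hW hwW, hWu hwW, hwv⟩ :)
  have hcover : s ⊆ (u ∪ V) ∪ v := by
    intro p hp
    by_cases hpz : p = z
    · exact Or.inl (Or.inr (hpz ▸ hzV))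
    · exact (hsuv ⟨hp, hpz⟩).imp_left Or.inl
  have hdisj : s ∩ ((u ∪ V) ∩ v) = ∅ := by
    refine subset_empty_iff.1 fun p ⟨hps, hpuV, hpv⟩ => ?_
    have hpz : p ∉ ({z} : Set X) := fun hpz => hzv (hpz ▸ hpv)
    exact (huv.subset ⟨⟨hps, hpz⟩, hpuV.elim id fun hpV => hWu ⟨hpV, hpz⟩, hpv⟩ :)
  rcases hs (u ∪ V) v (hu.union hV) hv hcover hdisj with h | h
  · exact Or.inl fun p hp => (h hp.1).elim id fun hpV => hWu ⟨hpV, hp.2⟩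
  · exact Or.inr (sdiff_subset.trans h)

section NormedSpace

variable {E : Type*} [NormedAddCommGroup E] [NormedSpace ℝ E]

theorem LipschitzWith.smul_const {α : Type*} [PseudoMetricSpace α] {f : α → ℝ} {K : ℝ≥0}
    (hf : LipschitzWith K f) (v : E) : LipschitzWith (K * ‖v‖₊) fun p => f p • v := by
  refine LipschitzWith.of_dist_le_mul fun x y => ?_
  rw [dist_eq_norm, ← sub_smul, norm_smul, ← dist_eq_norm, NNReal.coe_mul, coe_nnnorm,
    mul_right_comm]
  exact mul_le_mul_of_nonneg_right (hf.dist_le_mul x y) (norm_nonneg v)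

theorem exists_homeomorph_eq_add_of_lipschitzWith [CompleteSpace E] {u : E → E} {K : ℝ≥0}
    (hu : LipschitzWith K u) (hK : K < 1) : ∃ g : E ≃ₜ E, ∀ p, g p = p + u p := by
  have happrox : ApproximatesLinearOn (fun p => p + u p)
      (ContinuousLinearEquiv.refl ℝ E : E →L[ℝ] E) univ K := by
    refine LipschitzOnWith.approximatesLinearOn ?_
    convert hu.lipschitzOnWith (s := univ) using 1
    ext p
    simp
  have hK' : Subsingleton E ∨
      K < ‖((ContinuousLinearEquiv.refl ℝ E).symm : E →L[ℝ] E)‖₊⁻¹ := by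
    rcases subsingleton_or_nontrivial E with h | h
    · exact Or.inl h
    · right
      simpa using hK
  exact ⟨happrox.toHomeomorph _ hK', fun _ => rfl⟩

/-- Push `p` along `b - a` by the bump `(1 - dist p a / r)⁺`: the perturbation is Lipschitz with
constant `‖b - a‖ / r < 1`, so the result is a homeomorphism. -/
theorem exists_homeomorph_apply_eq_eqOn_compl_ball [CompleteSpace E] {a b : E} {r : ℝ}
    (hb : b ∈ ball a r) : ∃ g : E ≃ₜ E, g a = b ∧ EqOn g id (ball a r)ᶜ := by
  have hr : 0 < r := pos_of_mem_ball hb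
  set ρ : E → ℝ := fun p => max (r - dist p a) 0 / r
  have hρ : LipschitzWith (Real.toNNReal r)⁻¹ ρ := by
    refine LipschitzWith.of_dist_le_mul fun x y => ?_
    simp only [ρ]
    rw [NNReal.coe_inv, Real.coe_toNNReal _ hr.le, Real.dist_eq, div_sub_div_same, abs_div,
      abs_of_pos hr, inv_mul_eq_div]
    gcongr
    refine (abs_max_sub_max_le_abs _ _ _).trans ?_
    rw [sub_sub_sub_cancel_left, dist_comm x y]
    exact abs_dist_sub_le _ _ _
  have hK : (Real.toNNReal r)⁻¹ * ‖b - a‖₊ < 1 := by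
    rw [← NNReal.coe_lt_coe, NNReal.coe_mul, NNReal.coe_inv, Real.coe_toNNReal _ hr.le,
      coe_nnnorm, ← dist_eq_norm, NNReal.coe_one, inv_mul_lt_one₀ hr]
    exact hb
  obtain ⟨g, hg⟩ := exists_homeomorph_eq_add_of_lipschitzWith (hρ.smul_const (b - a)) hK
  refine ⟨g, ?_, fun p hp => ?_⟩
  · simp [hg, ρ, hr.le, hr.ne']
  · have : r - dist p a ≤ 0 := by simpa [sub_nonpos] using hp
    simp [hg, ρ, max_eq_right this]

theorem isPreconnected_ball_sdiff_center (h : 1 < Module.rank ℝ E) (c : E) (r : ℝ) :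
    IsPreconnected (ball c r \ {c}) := by
  rcases le_or_gt r 0 with hr | hr
  · simp [ball_eq_empty.2 hr, isPreconnected_empty]
  set ψ := OpenPartialHomeomorph.univBall c r
  have hψ : ψ '' {0}ᶜ = ball c r \ {c} := by
    have hsrc : ψ.source = univ := OpenPartialHomeomorph.univBall_source c r
    rw [compl_eq_univ_sdiff, ← hsrc, ψ.injOn.image_sdiff_subset (by simp [hsrc]), image_singleton,
      OpenPartialHomeomorph.univBall_apply_zero, ψ.image_source_eq_target,
      OpenPartialHomeomorph.univBall_target c hr]
  rw [← hψ]
  exact (isConnected_compl_singleton_of_one_lt_rank h 0).isPreconnected.image _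
    (ψ.continuousOn.mono (by simp [ψ]))

theorem mem_closure_ball_sdiff_center [Nontrivial E] (c : E) {r : ℝ} (hr : 0 < r) :
    c ∈ closure (ball c r \ {c}) :=
  mem_closure_of_tendsto (Filter.tendsto_id.mono_left nhdsWithin_le_nhds)
    (sdiff_mem_nhdsWithin_compl (ball_mem_nhds c hr) {c})

end NormedSpace

namespace OpenPartialHomeomorph

variable {M E : Type*} [TopologicalSpace M] [TopologicalSpace E] (φ : OpenPartialHomeomorph M E)

noncomputable def conjExtend (g : E → E) : M → M := by
  classical
  exact φ.source.piecewise (φ.symm ∘ g ∘ φ) id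

variable {φ}

theorem conjExtend_of_mem (g : E → E) {m : M} (hm : m ∈ φ.source) :
    φ.conjExtend g m = φ.symm (g (φ m)) := by
  simp [conjExtend, hm]

theorem conjExtend_of_notMem (g : E → E) {m : M} (hm : m ∉ φ.source) :
    φ.conjExtend g m = m := by
  simp [conjExtend, hm]

variable {g : E → E} {K : Set E}

theorem eqOn_conjExtend_compl (hg : EqOn g id Kᶜ) :
    EqOn (φ.conjExtend g) id (φ.symm '' K)ᶜ := by
  intro m hm
  by_cases hms : m ∈ φ.source
  · have : φ m ∉ K := fun h => hm ⟨φ m, h, φ.left_inv hms⟩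
    rw [conjExtend_of_mem g hms, hg this, id, φ.left_inv hms, id]
  · exact conjExtend_of_notMem g hms

theorem mapsTo_target_of_eqOn_compl (hKφ : K ⊆ φ.target) (hg : Injective g)
    (hgK : EqOn g id Kᶜ) : MapsTo g φ.target φ.target := by
  intro p hp
  by_cases hpK : p ∈ K
  · exact hKφ (hg.mapsTo_of_eqOn_compl hgK hpK)
  · rwa [hgK hpK]

theorem leftInverse_conjExtend {g' : E → E} (hgg' : LeftInverse g' g)
    (hg : MapsTo g φ.target φ.target) : LeftInverse (φ.conjExtend g') (φ.conjExtend g) := by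
  intro m
  by_cases hms : m ∈ φ.source
  · have hgt : g (φ m) ∈ φ.target := hg (φ.map_source hms)
    rw [conjExtend_of_mem g hms, conjExtend_of_mem g' (φ.map_target hgt), φ.right_inv hgt,
      hgg', φ.left_inv hms]
  · rw [conjExtend_of_notMem g hms, conjExtend_of_notMem g' hms]

theorem continuous_conjExtend [T2Space M] (hg : Continuous g) (hK : IsCompact K)
    (hKφ : K ⊆ φ.target) (hgK : EqOn g id Kᶜ) (hgφ : MapsTo g φ.target φ.target) :
    Continuous (φ.conjExtend g) := by
  have hKM : IsClosed (φ.symm '' K) :=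
    (hK.image_of_continuousOn (φ.continuousOn_symm.mono hKφ)).isClosed
  have hsource : ContinuousOn (φ.conjExtend g) φ.source :=
    (φ.continuousOn_symm.comp (hg.comp_continuousOn φ.continuousOn)
      (hgφ.comp φ.mapsTo)).congr fun m hm => conjExtend_of_mem g hm
  have hcompl : ContinuousOn (φ.conjExtend g) (φ.symm '' K)ᶜ :=
    continuousOn_id.congr (eqOn_conjExtend_compl hgK)
  refine continuous_iff_continuousAt.2 fun m => ?_
  by_cases hms : m ∈ φ.source
  · exact hsource.continuousAt (φ.open_source.mem_nhds hms)
  · refine hcompl.continuousAt (hKM.isOpen_compl.mem_nhds ?_)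
    rintro ⟨p, hp, rfl⟩
    exact hms (φ.map_target (hKφ hp))

theorem exists_homeomorph_eqOn_source [T2Space M] (g : E ≃ₜ E) (hK : IsCompact K)
    (hKφ : K ⊆ φ.target) (hgK : EqOn g id Kᶜ) :
    ∃ h : M ≃ₜ M, EqOn h (φ.symm ∘ g ∘ φ) φ.source ∧ EqOn h id (φ.symm '' K)ᶜ := by
  have hgK' : EqOn g.symm id Kᶜ := fun p hp => g.symm_apply_eq.2 (hgK hp).symm
  have hgφ := mapsTo_target_of_eqOn_compl hKφ g.injective hgK
  have hgφ' := mapsTo_target_of_eqOn_compl hKφ g.symm.injective hgK'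
  refine ⟨⟨⟨φ.conjExtend g, φ.conjExtend g.symm, leftInverse_conjExtend g.symm_apply_apply hgφ,
    leftInverse_conjExtend g.apply_symm_apply hgφ'⟩,
    continuous_conjExtend g.continuous hK hKφ hgK hgφ,
    continuous_conjExtend g.symm.continuous hK hKφ hgK' hgφ'⟩,
    fun m hm => conjExtend_of_mem g hm, eqOn_conjExtend_compl hgK⟩

end OpenPartialHomeomorph

section Manifold

variable {E M : Type*} [NormedAddCommGroup E] [NormedSpace ℝ E] [TopologicalSpace M]
  [ChartedSpace E M]

theorem exists_isOpen_isPreconnected_sdiff_singleton (h : 1 < Module.rank ℝ E) {s : Set M}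
    (hs : IsOpen s) {z : M} (hz : z ∈ s) :
    ∃ V ⊆ s, IsOpen V ∧ z ∈ V ∧ IsPreconnected (V \ {z}) ∧ z ∈ closure (V \ {z}) := by
  have : Nontrivial E := rank_pos_iff_nontrivial.1 (zero_lt_one.trans h)
  set φ := chartAt E z
  have hzφ : z ∈ φ.source := mem_chart_source E z
  have hU : φ.target ∩ φ.symm ⁻¹' s ∈ 𝓝 (φ z) :=
    (φ.isOpen_inter_preimage_symm hs).mem_nhds
      ⟨φ.map_source hzφ, by rwa [mem_preimage, φ.left_inv hzφ]⟩
  obtain ⟨r, hr, hrU⟩ := Metric.mem_nhds_iff.1 hU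
  have hrφ : ball (φ z) r ⊆ φ.target := fun p hp => (hrU hp).1
  have hV : φ.symm '' ball (φ z) r \ {z} = φ.symm '' (ball (φ z) r \ {φ z}) := by
    rw [(φ.symm.injOn.mono hrφ).image_sdiff_subset (singleton_subset_iff.2 (mem_ball_self hr)),
      image_singleton, φ.left_inv hzφ]
  refine ⟨φ.symm '' ball (φ z) r, fun p ⟨q, hq, hqp⟩ => hqp ▸ (hrU hq).2,
    φ.isOpen_image_symm_of_subset_target isOpen_ball hrφ, ⟨φ z, mem_ball_self hr, φ.left_inv hzφ⟩,
    ?_, ?_⟩ <;> rw [hV]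
  · exact (isPreconnected_ball_sdiff_center h _ r).image _
      (φ.continuousOn_symm.mono (sdiff_subset.trans hrφ))
  · simpa [φ.left_inv hzφ] using mem_closure_image (φ.continuousAt_symm (φ.map_source hzφ))
      (mem_closure_ball_sdiff_center (φ z) hr)

theorem isPreconnected_compl_of_finite [T1Space M] [ConnectedSpace M] (h : 1 < Module.rank ℝ E)
    {F : Set M} (hF : F.Finite) : IsPreconnected Fᶜ := by
  induction F, hF using Set.Finite.induction_on with
  | empty => simpa using isPreconnected_univ
  | @insert z F hzF hF ih =>
    obtain ⟨V, hVF, hV, hzV, hVz, hz⟩ :=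
      exists_isOpen_isPreconnected_sdiff_singleton h hF.isClosed.isOpen_compl hzF
    have hcompl : (insert z F)ᶜ = Fᶜ \ {z} := by
      ext
      simp [and_comm]
    exact hcompl ▸ ih.sdiff_singleton hV hzV hVF hVz hz

end Manifold

section Homogeneity

variable {M : Type*} [TopologicalSpace M] [T2Space M]

theorem eventually_exists_homeomorph_apply_eq_eqOn (E : Type*) [NormedAddCommGroup E]
    [NormedSpace ℝ E] [ProperSpace E] [ChartedSpace E M] {F : Set M} (hF : IsClosed F) {a : M}
    (ha : a ∉ F) : ∀ᶠ b in 𝓝 a, ∃ h : M ≃ₜ M, h a = b ∧ EqOn h id F := by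
  set φ := chartAt E a
  have haφ : a ∈ φ.source := mem_chart_source E a
  have hU : φ.target ∩ φ.symm ⁻¹' Fᶜ ∈ 𝓝 (φ a) :=
    (φ.isOpen_inter_preimage_symm hF.isOpen_compl).mem_nhds
      ⟨φ.map_source haφ, by rwa [mem_preimage, φ.left_inv haφ]⟩
  obtain ⟨r, hr, hrU⟩ := nhds_basis_closedBall.mem_iff.1 hU
  filter_upwards [φ.open_source.mem_nhds haφ,
    φ.continuousAt haφ |>.preimage_mem_nhds (ball_mem_nhds _ hr)] with b hbφ hbr
  obtain ⟨g, hga, hg⟩ := exists_homeomorph_apply_eq_eqOn_compl_ball hbr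
  obtain ⟨h, hφh, hh⟩ := φ.exists_homeomorph_eqOn_source g (isCompact_closedBall _ _)
    (fun p hp => (hrU hp).1) (hg.mono (compl_subset_compl.2 ball_subset_closedBall))
  refine ⟨h, by rw [hφh haφ, comp_apply, comp_apply, hga, φ.left_inv hbφ], fun m hm => hh ?_⟩
  rintro ⟨p, hp, rfl⟩
  exact (hrU hp).2 hm

/-- Points related by a homeomorphism fixing `F` form open classes, so they form a single class
on a preconnected complement. -/
theorem exists_homeomorph_apply_eq_eqOn (E : Type*) [NormedAddCommGroup E] [NormedSpace ℝ E]
    [ProperSpace E] [ChartedSpace E M] {F : Set M} (hF : IsClosed F) (hFc : IsPreconnected Fᶜ)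
    {a b : M} (ha : a ∉ F) (hb : b ∉ F) : ∃ h : M ≃ₜ M, h a = b ∧ EqOn h id F := by
  refine hFc.induction₂ (fun a b => ∃ h : M ≃ₜ M, h a = b ∧ EqOn h id F)
    (fun x hx => eventually_nhdsWithin_of_eventually_nhds
      (eventually_exists_homeomorph_apply_eq_eqOn E hF hx)) ?_ ?_ ha hb
  · rintro x - - - - - ⟨h, rfl, hF⟩ ⟨h', rfl, hF'⟩
    exact ⟨h.trans h', rfl, fun m hm => by simp [hF hm, hF' hm]⟩
  · rintro x - - - ⟨h, rfl, hF⟩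
    exact ⟨h.symm, h.symm_apply_apply x, fun m hm => h.symm_apply_eq.2 (hF hm).symm⟩

theorem exists_homeomorph_apply_eq_of_injective (E : Type*) [NormedAddCommGroup E]
    [NormedSpace ℝ E] [ProperSpace E] (hE : 1 < Module.rank ℝ E) [ChartedSpace E M]
    [ConnectedSpace M] {n : ℕ} {x y : Fin n → M} (hx : Injective x) (hy : Injective y) :
    ∃ h : M ≃ₜ M, ∀ i, h (x i) = y i := by
  induction n with
  | zero => exact ⟨Homeomorph.refl M, finZeroElim⟩
  | succ n ih =>
    obtain ⟨h₀, hh₀⟩ := ih (hx.comp (Fin.castSucc_injective n))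
      (hy.comp (Fin.castSucc_injective n))
    have hxF : h₀ (x (Fin.last n)) ∉ range (y ∘ Fin.castSucc) := by
      rintro ⟨i, hi⟩
      rw [← hh₀ i] at hi
      exact (Fin.castSucc_lt_last i).ne (hx (h₀.injective hi))
    have hyF : y (Fin.last n) ∉ range (y ∘ Fin.castSucc) := by
      rintro ⟨i, hi⟩
      exact (Fin.castSucc_lt_last i).ne (hy hi)
    obtain ⟨h₁, hh₁, hF⟩ := exists_homeomorph_apply_eq_eqOn E (finite_range _).isClosed
      (isPreconnected_compl_of_finite hE (finite_range _)) hxF hyF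
    refine ⟨h₀.trans h₁, Fin.lastCases hh₁ fun i => ?_⟩
    exact (congrArg h₁ (hh₀ i)).trans (hF ⟨i, rfl⟩)

end Homogeneity

theorem surface_n_point_homogeneous_general
    {M : Type*} [TopologicalSpace M] [T2Space M]
    [ChartedSpace (EuclideanSpace ℝ (Fin 2)) M] [ConnectedSpace M]
    (n : ℕ) (x y : Fin n → M) (hx : Function.Injective x) (hy : Function.Injective y) :
    ∃ h : M ≃ₜ M, ∀ i, h (x i) = y i := by
  have hrank : 1 < Module.rank ℝ (EuclideanSpace ℝ (Fin 2)) := by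
    rw [← Module.finrank_eq_rank, finrank_euclideanSpace_fin]
    norm_num
  exact exists_homeomorph_apply_eq_of_injective _ hrank hx hy

/-- A nonempty connected topological 2-manifold is `n`-point homogeneous: any injective
`n`-tuple of points can be taken to any other injective `n`-tuple by a homeomorphism. -/
theorem surface_n_point_homogeneous
    {M : Type*} [TopologicalSpace M] [T2Space M]
    [ChartedSpace (EuclideanSpace ℝ (Fin 2)) M] [Nonempty M] [ConnectedSpace M]
    (n : ℕ) (x y : Fin n → M) (hx : Function.Injective x) (hy : Function.Injective y) :
    ∃ h : M ≃ₜ M, ∀ i, h (x i) = y i :=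
  surface_n_point_homogeneous_general n x y hx hy
end

section
/- Let G be a group and N a normal subgroup of G such that N is isomorphic (as a group) to FreeGroup (Fin 2) and N has index 2 in G. Then the center of G has at most 2 elements. -/
private lemma list_eq_replicate_of_append_singleton_eq_cons {α : Type*} {x : α} :
    ∀ {l : List α}, l ++ [x] = x :: l → l = List.replicate l.length x := by
  intro l
  induction l with
  | nil => intro; rfl
  | cons h t ih =>
    intro heq
    simp only [List.cons_append, List.cons.injEq] at heq
    obtain ⟨rfl, heq⟩ := heq
    simp only [List.length_cons, List.replicate_succ, List.cons.injEq, true_and]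
    exact ih heq

private lemma freeGroup_central_eq_one (w : FreeGroup (Fin 2))
    (hw : ∀ v : FreeGroup (Fin 2), w * v = v * w) : w = 1 := by
  by_contra hne
  have hLne : w.toWord ≠ [] := fun h => hne (FreeGroup.toWord_eq_nil_iff.mp h)
  obtain ⟨⟨a, s⟩, L', hE⟩ : ∃ hd tl, w.toWord = hd :: tl := by
    cases hE : w.toWord with
    | nil => exact absurd hE hLne
    | cons hd tl => exact ⟨hd, tl, rfl⟩
  have hLred : FreeGroup.reduce ((a, s) :: L') = (a, s) :: L' := by
    rw [← hE]; exact w.reduce_toWord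
  set g : Fin 2 := if a = 0 then 1 else 0 with hg
  have hga : g ≠ a := by fin_cases a <;> simp [hg]
  set y : Fin 2 × Bool := (g, true) with hy
  -- toWord (of g * w) = y :: L
  have h1 : (FreeGroup.of g * w).toWord = y :: ((a, s) :: L') := by
    have : FreeGroup.of g * w = FreeGroup.mk (y :: ((a, s) :: L')) := by
      conv_lhs => rw [← FreeGroup.mk_toWord (x := w), hE]
      rw [show FreeGroup.of g = FreeGroup.mk [y] from rfl, FreeGroup.mul_mk]
      rfl
    rw [this, FreeGroup.toWord_mk, FreeGroup.reduce.cons, hLred]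
    show (if y.1 = (a, s).1 ∧ y.2 = !(a, s).2 then L' else y :: (a, s) :: L') = y :: (a, s) :: L'
    rw [if_neg]
    exact fun h => hga h.1
  have h2 : (w * FreeGroup.of g).toWord = FreeGroup.reduce (((a, s) :: L') ++ [y]) := by
    conv_lhs => rw [← FreeGroup.mk_toWord (x := w), hE]
    rw [show FreeGroup.of g = FreeGroup.mk [y] from rfl, FreeGroup.mul_mk, FreeGroup.toWord_mk]
  have heq : FreeGroup.reduce (((a, s) :: L') ++ [y]) = y :: ((a, s) :: L') := by
    rw [← h2, hw (FreeGroup.of g), h1]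
  have hred : FreeGroup.Red (((a, s) :: L') ++ [y]) (y :: ((a, s) :: L')) := by
    rw [← heq]; exact FreeGroup.reduce.red
  have hsub := hred.sublist
  have hlen : (y :: ((a, s) :: L')).length = (((a, s) :: L') ++ [y]).length := by
    simp [Nat.add_comm]
  have hEq : (((a, s) :: L') ++ [y]) = y :: ((a, s) :: L') :=
    (hsub.eq_of_length hlen).symm
  have := list_eq_replicate_of_append_singleton_eq_cons hEq
  have : (a, s) = y := by
    have h0 : ((a, s) :: L').head? = (List.replicate ((a, s) :: L').length y).head? := by rw [← this]
    simpa [List.head?, List.replicate_succ] using h0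
  exact hga (congrArg Prod.fst this).symm

/-- If a group `G` has a normal subgroup `N` of index 2 which is free of rank 2,
then the center of `G` has at most 2 elements. -/
theorem center_card_le_two_of_index_two_free
    {G : Type*} [Group G] (N : Subgroup G) [N.Normal]
    (h_free : Nonempty (N ≃* FreeGroup (Fin 2))) (h_idx : N.index = 2) :
    Nat.card (Subgroup.center G) ≤ 2 := by
  obtain ⟨e⟩ := h_free
  have hfin : Finite (G ⧸ N) := by
    have : Nat.card (G ⧸ N) = 2 := h_idx
    exact Nat.finite_of_card_ne_zero (by omega)
  have hinj : Function.Injective (fun z : Subgroup.center G => ((z : G) : G ⧸ N)) := by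
    intro z₁ z₂ h
    have hd : (z₁ : G)⁻¹ * (z₂ : G) ∈ N := by
      rwa [QuotientGroup.eq] at h
    have hdc : (z₁ : G)⁻¹ * (z₂ : G) ∈ Subgroup.center G :=
      mul_mem (inv_mem z₁.2) z₂.2
    -- the element of N
    set d : N := ⟨(z₁ : G)⁻¹ * (z₂ : G), hd⟩ with hdd
    have hcomm : ∀ v : FreeGroup (Fin 2), e d * v = v * e d := by
      intro v
      obtain ⟨u, rfl⟩ := e.surjective v
      rw [← map_mul, ← map_mul]
      congr 1
      ext
      exact (Subgroup.mem_center_iff.mp hdc (u : G)).symm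
    have : e d = 1 := freeGroup_central_eq_one _ hcomm
    have hd1 : d = 1 := by
      apply e.injective; rw [this, map_one]
    have : (z₁ : G)⁻¹ * (z₂ : G) = 1 := congrArg Subtype.val hd1
    have : (z₁ : G) = (z₂ : G) := by
      rw [← mul_one (z₁ : G), ← this]; group
    exact Subtype.ext this
  calc Nat.card (Subgroup.center G) ≤ Nat.card (G ⧸ N) := Nat.card_le_card_of_injective _ hinj
    _ = 2 := h_idx
end

section
/- Let G be a group and N a normal subgroup of G such that N is isomorphic (as a group) to FreeGroup (Fin 2) and N has finite index in G. Let Z denote the center of G and π : G → G ⧸ Z the quotient map. Then π restricted to N is injective, and the image π(N) is a subgroup of finite index of G ⧸ Z which is isomorphic to FreeGroup (Fin 2). -/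
/-!
A nontrivial central element `w` of a free group on at least two generators cannot exist: for a
letter `c` that cancels with neither end of the reduced word of `w`, the reduced words of `w * c`
and `c * w` are `w ++ [c]` and `c :: w`, so commuting with `c` forces every letter of `w` to be
`c`; but `c` can be chosen on a generator different from that of the first letter of `w`.
Hence `N ≅ F₂` meets the centre of `G` trivially, so `G → G ⧸ Z(G)` is injective on `N`.
-/

theorem List.forall_mem_eq_of_append_singleton_eq_cons {α : Type*} :
    ∀ {l : List α} {a : α}, l ++ [a] = a :: l → ∀ x ∈ l, x = a
  | [], _, _, _, hx => absurd hx List.not_mem_nil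
  | b :: t, a, h, x, hx => by
    obtain ⟨rfl, ht⟩ := List.cons.inj h
    rcases List.mem_cons.mp hx with rfl | hx
    · rfl
    · exact forall_mem_eq_of_append_singleton_eq_cons ht x hx

namespace FreeGroup

variable {α : Type*} [DecidableEq α]

theorem toWord_mul_mk_singleton {x : FreeGroup α} {c : α × Bool}
    (h : IsReduced (x.toWord ++ [c])) : (x * mk [c]).toWord = x.toWord ++ [c] := by
  rw [toWord_mul, toWord_mk, reduce_singleton, h.reduce_eq]

theorem toWord_mk_singleton_mul {x : FreeGroup α} {c : α × Bool}
    (h : IsReduced (c :: x.toWord)) : (mk [c] * x).toWord = c :: x.toWord := by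
  rw [toWord_mul, toWord_mk, reduce_singleton, List.singleton_append, h.reduce_eq]

theorem forall_mem_toWord_eq_of_commute {x : FreeGroup α} {c : α × Bool}
    (hx : Commute x (mk [c])) (hr : IsReduced (x.toWord ++ [c]))
    (hl : IsReduced (c :: x.toWord)) : ∀ y ∈ x.toWord, y = c := by
  apply List.forall_mem_eq_of_append_singleton_eq_cons
  rw [← toWord_mul_mk_singleton hr, ← toWord_mk_singleton_mul hl, hx.eq]

end FreeGroup

theorem FreeGroup.center_eq_bot {α : Type*} [Nontrivial α] :
    Subgroup.center (FreeGroup α) = ⊥ := by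
  classical
  refine (Subgroup.eq_bot_iff_forall _).mpr fun w hw => ?_
  by_contra hw1
  have hL : w.toWord ≠ [] := mt toWord_eq_nil_iff.mp hw1
  set h := w.toWord.head hL
  obtain ⟨a, ha⟩ := exists_ne h.1
  set c : α × Bool := (a, (w.toWord.getLast hL).2)
  have hl : IsReduced (c :: w.toWord) := List.isChain_cons.mpr
    ⟨by simp [List.head?_eq_some_head hL, c, ha, h], isReduced_toWord⟩
  have hr : IsReduced (w.toWord ++ [c]) := List.isChain_append.mpr
    ⟨isReduced_toWord, IsReduced.singleton, by simp [List.getLast?_eq_some_getLast hL, c]⟩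
  have hcomm : Commute w (mk [c]) := (Subgroup.mem_center_iff.mp hw _).symm
  have := forall_mem_toWord_eq_of_commute hcomm hr hl h (List.head_mem hL)
  exact ha (congrArg Prod.fst this).symm

namespace Subgroup

variable {G H : Type*} [Group G] [Group H]

theorem center_eq_bot_of_mulEquiv (e : G ≃* H) (h : center H = ⊥) : center G = ⊥ := by
  refine (eq_bot_iff_forall _).mpr fun z hz => e.injective ?_
  rw [map_one, ← mem_bot, ← h, mem_center_iff]
  intro g
  simpa using congrArg e ((mem_center_iff.mp hz) (e.symm g))

theorem disjoint_center_of_center_eq_bot {N : Subgroup G} (h : center N = ⊥) :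
    Disjoint N (center G) := by
  refine disjoint_def.mpr fun {z} hzN hz => ?_
  have : (⟨z, hzN⟩ : N) ∈ center N :=
    mem_center_iff.mpr fun g => Subtype.ext (mem_center_iff.mp hz g)
  rw [h, mem_bot] at this
  exact congrArg Subtype.val this

theorem finiteIndex_map_of_surjective (N : Subgroup G) [N.FiniteIndex] {f : G →* H}
    (hf : Function.Surjective f) : (N.map f).FiniteIndex :=
  ⟨fun h0 => FiniteIndex.index_ne_zero (H := N)
    (Nat.eq_zero_of_zero_dvd (h0 ▸ N.index_map_dvd hf))⟩

noncomputable def equivMapOfInjOn (N : Subgroup G) (f : G →* H) (hf : Set.InjOn f N) :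
    N ≃* N.map f :=
  MulEquiv.ofBijective (f.subgroupMap N)
    ⟨fun x y hxy => Subtype.ext (hf x.2 y.2 (congrArg Subtype.val hxy)),
      f.subgroupMap_surjective N⟩

end Subgroup

theorem MonoidHom.injOn_iff_disjoint_ker {G H : Type*} [Group G] [Group H] (f : G →* H)
    (N : Subgroup G) : Set.InjOn f N ↔ Disjoint N f.ker := by
  rw [Set.injOn_iff_map_eq_one, Subgroup.disjoint_def]
  exact ⟨fun h x hx hk => h x hx hk, fun h x hx hk => h hx hk⟩

theorem free_subgroup_injects_in_quotient_by_center_general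
    {G : Type*} [Group G] (N : Subgroup G)
    (h_free : Nonempty (N ≃* FreeGroup (Fin 2))) (h_idx : N.FiniteIndex) :
    Set.InjOn (QuotientGroup.mk' (Subgroup.center G)) (N : Set G) ∧
    (N.map (QuotientGroup.mk' (Subgroup.center G))).FiniteIndex ∧
    Nonempty ((N.map (QuotientGroup.mk' (Subgroup.center G))) ≃* FreeGroup (Fin 2)) := by
  obtain ⟨e⟩ := h_free
  have hinj : Set.InjOn (QuotientGroup.mk' (Subgroup.center G)) (N : Set G) := by
    rw [MonoidHom.injOn_iff_disjoint_ker, QuotientGroup.ker_mk']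
    exact Subgroup.disjoint_center_of_center_eq_bot
      (Subgroup.center_eq_bot_of_mulEquiv e FreeGroup.center_eq_bot)
  exact ⟨hinj, N.finiteIndex_map_of_surjective (QuotientGroup.mk'_surjective _),
    ⟨(N.equivMapOfInjOn _ hinj).symm.trans e⟩⟩

/-- If a group `G` has a normal subgroup `N` of finite index which is free of rank 2,
then the quotient map `π : G → G ⧸ center G` is injective on `N`, and the image
`π(N)` is a finite-index subgroup of `G ⧸ center G` isomorphic to the free group
of rank 2. -/
theorem free_subgroup_injects_in_quotient_by_center
    {G : Type*} [Group G] (N : Subgroup G) [N.Normal]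
    (h_free : Nonempty (N ≃* FreeGroup (Fin 2))) (h_idx : N.FiniteIndex) :
    Set.InjOn (QuotientGroup.mk' (Subgroup.center G)) (N : Set G) ∧
    (N.map (QuotientGroup.mk' (Subgroup.center G))).FiniteIndex ∧
    Nonempty ((N.map (QuotientGroup.mk' (Subgroup.center G))) ≃* FreeGroup (Fin 2)) :=
  free_subgroup_injects_in_quotient_by_center_general N h_free h_idx
end

section
/- Say a group G is NNF if G has no normal subgroup N such that N is a nonabelian free group (i.e., N satisfies IsFreeGroup and N is not commutative). If G and H are both NNF, then the direct product G × H is NNF: every normal subgroup of G × H which is a free group is commutative. -/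
/-- A group is `NNF` if it has no normal subgroup which is a nonabelian free group,
i.e. every normal subgroup which is a free group is commutative. -/
def NNF (G : Type*) [Group G] : Prop :=
  ∀ N : Subgroup G, N.Normal → IsFreeGroup N → ∀ a b : N, a * b = b * a

/-!
If `N` is a normal free subgroup of `G × H`, its intersections with `G` and `H` are normal in
those factors and free by Nielsen–Schreier, hence abelian when `G` and `H` are NNF. Every
commutator of elements of `N` splits into a `G`-part and an `H`-part lying in these
intersections, so any two commutators in `N` commute. A free group with two distinct generators
`a`, `b` has no such property, as `⁅a, b⁆` and `⁅a, b ^ 2⁆` do not commute; so `N` has at most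
one generator and is abelian.
-/

open scoped commutatorElement

theorem FreeGroup.commute_of_subsingleton {ι : Type*} [Subsingleton ι] (x y : FreeGroup ι) :
    Commute x y := by
  cases isEmpty_or_nonempty ι
  · exact Subsingleton.elim _ _
  · have : Unique ι := uniqueOfSubsingleton (Classical.arbitrary ι)
    exact IsCyclic.commGroup.mul_comm x y

theorem FreeGroup.not_commute_commutatorElement_of_false_of_true :
    ¬ Commute ⁅of false, of true⁆ ⁅of false, of true ^ 2⁆ := by
  rw [commute_iff_eq]
  decide

theorem IsFreeGroup.of_injective {A B : Type*} [Group A] [Group B] [IsFreeGroup B]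
    {f : A →* B} (hf : Function.Injective f) : IsFreeGroup A :=
  IsFreeGroup.ofMulEquiv (MonoidHom.ofInjective hf).symm

theorem IsFreeGroup.commute_of_forall_commute_commutatorElement {F : Type*} [Group F]
    [IsFreeGroup F] (h : ∀ a b c d : F, Commute ⁅a, b⁆ ⁅c, d⁆) (x y : F) : Commute x y := by
  rcases subsingleton_or_nontrivial (Generators F) with _ | ⟨i, j, hij⟩
  · simpa using ((FreeGroup.commute_of_subsingleton (toFreeGroup F x) (toFreeGroup F y)).map
      (toFreeGroup F).symm)
  · classical
    let f : F →* FreeGroup Bool := lift fun k => FreeGroup.of (decide (k = j))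
    have := (h (of i) (of j) (of i) (of j ^ 2)).map f
    simp only [map_commutatorElement, lift_of, hij, decide_false, decide_true, map_pow, f] at this
    exact absurd this FreeGroup.not_commute_commutatorElement_of_false_of_true

theorem NNF.commute_of_injective {G K : Type*} [Group G] [Group K] (hG : NNF G)
    {f : G →* K} (hf : Function.Injective f) {N : Subgroup K} (hN : N.Normal) [IsFreeGroup N]
    {x y : G} (hx : f x ∈ N) (hy : f y ∈ N) : Commute x y := by
  have : IsFreeGroup (N.comap f) :=
    IsFreeGroup.of_injective (f := f.subgroupComap N) fun a b hab =>
      Subtype.ext (hf (congrArg Subtype.val hab))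
  exact congrArg Subtype.val (hG (N.comap f) (hN.comap f) this ⟨x, hx⟩ ⟨y, hy⟩)

theorem NNF.commute_commutatorElement_prod {G H : Type*} [Group G] [Group H] (hG : NNF G)
    (hH : NNF H) {N : Subgroup (G × H)} (hN : N.Normal) [IsFreeGroup N] {p q p' q' : G × H}
    (hp : p ∈ N) (hp' : p' ∈ N) : Commute ⁅p, q⁆ ⁅p', q'⁆ := by
  have mem : ∀ {r} (s : G × H), r ∈ N → ⁅r, s⁆ ∈ N := fun s hr =>
    Subgroup.commutator_le_left N ⊤ (Subgroup.commutator_mem_commutator hr (Subgroup.mem_top s))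
  have mem_inl : ∀ {r} (s : G × H), r ∈ N → MonoidHom.inl G H ⁅r.1, s.1⁆ ∈ N := fun s hr => by
    convert mem (MonoidHom.inl G H s.1) hr using 1
    ext <;> simp [commutatorElement_def]
  have mem_inr : ∀ {r} (s : G × H), r ∈ N → MonoidHom.inr G H ⁅r.2, s.2⁆ ∈ N := fun s hr => by
    convert mem (MonoidHom.inr G H s.2) hr using 1
    ext <;> simp [commutatorElement_def]
  refine Prod.commute_iff.2 ⟨?_, ?_⟩
  · simpa [commutatorElement_def] using
      hG.commute_of_injective (Prod.mk_left_injective 1) hN (mem_inl q hp) (mem_inl q' hp')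
  · simpa [commutatorElement_def] using
      hH.commute_of_injective (Prod.mk_right_injective 1) hN (mem_inr q hp) (mem_inr q' hp')

/-- The class `NNF` is closed under direct products. -/
theorem NNF.prod {G H : Type*} [Group G] [Group H] (hG : NNF G) (hH : NNF H) :
    NNF (G × H) := by
  intro N hN _ a b
  refine (IsFreeGroup.commute_of_forall_commute_commutatorElement (fun c d c' d' => ?_) a b).eq
  exact Subtype.ext (hG.commute_commutatorElement_prod hH hN c.2 c'.2)
end

section
/- Let G = (ℤ × ℤ) ⋊ C₂ be the semidirect product of ℤ × ℤ by the cyclic group C₂ of order 2, where the nontrivial element of C₂ acts by swapping the two coordinates of ℤ × ℤ. Then the abelianization of G is isomorphic to ℤ × (ℤ/2ℤ); in particular the first Betti number of G (the rank of its abelianization) equals 1. -/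
/-!
The homomorphism `(a, b) ⋊ h ↦ (a + b, h)` to `ℤ × ℤ/2` is invariant under the swap, hence a
homomorphism out of the semidirect product, and it factors through the abelianization.
Conversely, in the abelianization conjugation by the generator of `ℤ/2` is trivial, so the
images of `(1, 0)` and of its swap `(0, 1)` agree and `(a, b)` maps to `(a + b) • (1, 0)`;
together with `ℤ/2 → G` this gives the inverse `ℤ × ℤ/2 → Gᵃᵇ`.
-/

/-- The order-2 automorphism of `Multiplicative (ℤ × ℤ)` swapping the two coordinates. -/
def swapAut : MulAut (Multiplicative (ℤ × ℤ)) :=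
  AddEquiv.toMultiplicative (AddEquiv.prodComm : ℤ × ℤ ≃+ ℤ × ℤ)

/-- The action of `ℤ/2` on `ℤ × ℤ` in which the nontrivial element acts by swapping
the two coordinates. -/
def swapAction : Multiplicative (ZMod 2) →* MulAut (Multiplicative (ℤ × ℤ)) :=
  AddMonoidHom.toMultiplicativeLeft
    (ZMod.lift 2
      ⟨zmultiplesHom (Additive (MulAut (Multiplicative (ℤ × ℤ)))) (Additive.ofMul swapAut), by
        show (2 : ℤ) • Additive.ofMul swapAut = 0
        rw [two_zsmul, ← ofMul_mul]
        rfl⟩)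

open Multiplicative

namespace SemidirectProduct

variable {N H : Type*} [Group N] [Group H] {φ : H →* MulAut N}

theorem abelianization_of_inl_aut (h : H) (n : N) :
    Abelianization.of (inl (φ h n) : N ⋊[φ] H) = Abelianization.of (inl n) := by
  rw [inl_aut, map_mul, map_mul, mul_right_comm, ← map_mul Abelianization.of, ← map_mul inr,
    mul_inv_cancel, map_one, map_one, one_mul]

section LiftOfInvariant

variable {A : Type*} [CommGroup A] (f : N →* A) (g : H →* A) (hf : ∀ h n, f (φ h n) = f n)

def liftOfInvariant : N ⋊[φ] H →* A :=
  lift f g fun h => MonoidHom.ext fun n => by simp [hf]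

@[simp]
theorem liftOfInvariant_inl (n : N) : liftOfInvariant f g hf (inl n) = f n :=
  lift_inl _ _ _ n

@[simp]
theorem liftOfInvariant_inr (h : H) : liftOfInvariant f g hf (inr h) = g h :=
  lift_inr _ _ _ h

end LiftOfInvariant

end SemidirectProduct

open SemidirectProduct

theorem swapAction_ofAdd_one : swapAction (ofAdd 1) = swapAut := rfl

theorem swapAction_eq_one_or_swapAut (h : Multiplicative (ZMod 2)) :
    swapAction h = 1 ∨ swapAction h = swapAut := by
  obtain rfl | rfl : h = 1 ∨ h = ofAdd 1 := by revert h; decide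
  exacts [.inl (map_one _), .inr rfl]

def coordSum : Multiplicative (ℤ × ℤ) →* Multiplicative ℤ :=
  AddMonoidHom.toMultiplicative (.coprod (.id ℤ) (.id ℤ))

theorem coordSum_apply (x : Multiplicative (ℤ × ℤ)) :
    coordSum x = ofAdd ((toAdd x).1 + (toAdd x).2) := rfl

theorem coordSum_swapAction (h : Multiplicative (ZMod 2)) (x : Multiplicative (ℤ × ℤ)) :
    coordSum (swapAction h x) = coordSum x := by
  rcases swapAction_eq_one_or_swapAut h with hh | hh <;> rw [hh]
  · rfl
  · exact congrArg ofAdd (add_comm _ _)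

abbrev SwapProduct := Multiplicative (ℤ × ℤ) ⋊[swapAction] Multiplicative (ZMod 2)

namespace SwapProduct

def toProd : SwapProduct →* Multiplicative ℤ × Multiplicative (ZMod 2) :=
  liftOfInvariant ((MonoidHom.inl _ _).comp coordSum) (MonoidHom.inr _ _)
    fun h x => by rw [MonoidHom.comp_apply, coordSum_swapAction, MonoidHom.comp_apply]

@[simp]
theorem toProd_inl (x : Multiplicative (ℤ × ℤ)) : toProd (inl x) = (coordSum x, 1) := by
  simp [toProd]

@[simp]
theorem toProd_inr (c : Multiplicative (ZMod 2)) : toProd (inr c) = (1, c) := by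
  simp [toProd]

def abelianizationGen : Abelianization SwapProduct :=
  Abelianization.of (inl (ofAdd (1, 0)))

theorem lift_toProd_abelianizationGen :
    Abelianization.lift toProd abelianizationGen = (ofAdd 1, 1) := rfl

theorem abelianization_of_inl (x : Multiplicative (ℤ × ℤ)) :
    Abelianization.of (inl x : SwapProduct) = abelianizationGen ^ toAdd (coordSum x) := by
  have hx : x = ofAdd (1, 0) ^ (toAdd x).1 * swapAut (ofAdd (1, 0)) ^ (toAdd x).2 := by
    apply toAdd.injective
    simp [swapAut]
  have hswap : Abelianization.of (inl (swapAut (ofAdd (1, 0))) : SwapProduct) =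
      abelianizationGen := by
    rw [← swapAction_ofAdd_one, abelianization_of_inl_aut]
    rfl
  conv_lhs => rw [hx]; simp only [map_mul, map_zpow]; rw [hswap]
  rw [coordSum_apply, toAdd_ofAdd, zpow_add]
  rfl

noncomputable def ofProd :
    Multiplicative ℤ × Multiplicative (ZMod 2) →* Abelianization SwapProduct :=
  (zpowersHom _ abelianizationGen).coprod (Abelianization.of.comp inr)

theorem ofProd_apply (p : Multiplicative ℤ × Multiplicative (ZMod 2)) :
    ofProd p = abelianizationGen ^ toAdd p.1 * Abelianization.of (inr p.2) := rfl

theorem ofProd_comp_lift_toProd :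
    ofProd.comp (Abelianization.lift toProd) = MonoidHom.id _ := by
  refine Abelianization.hom_ext _ _
    (hom_ext (MonoidHom.ext fun x => ?_) (MonoidHom.ext fun c => ?_))
  · simp only [MonoidHom.comp_apply, Abelianization.lift_apply_of, toProd_inl, ofProd_apply]
    simp [abelianization_of_inl]
  · simp only [MonoidHom.comp_apply, Abelianization.lift_apply_of, toProd_inr, ofProd_apply]
    simp

theorem lift_toProd_comp_ofProd :
    (Abelianization.lift toProd).comp ofProd = MonoidHom.id _ := by
  ext ⟨n, c⟩ <;> simp [ofProd_apply, lift_toProd_abelianizationGen]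

end SwapProduct

/-- The abelianization of the semidirect product `(ℤ × ℤ) ⋊ (ℤ/2)`, where the nontrivial
element of `ℤ/2` acts by swapping the coordinates, is isomorphic to `ℤ × ℤ/2`;
in particular the first Betti number of this semidirect product is 1. -/
theorem abelianization_semidirect_swap :
    Nonempty
      (Abelianization (SemidirectProduct (Multiplicative (ℤ × ℤ))
          (Multiplicative (ZMod 2)) swapAction) ≃*
        Multiplicative ℤ × Multiplicative (ZMod 2)) :=
  ⟨MonoidHom.toMulEquiv _ _ SwapProduct.ofProd_comp_lift_toProd
    SwapProduct.lift_toProd_comp_ofProd⟩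
end
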